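/- Let X be a real Banach space such that for every bounded linear operator T : X → X and every unit vector x at which T attains its norm, T maps the Birkhoff-James orthogonal complement of x into that of Tx (i.e., x ⊥_B w implies Tx ⊥_B Tw). Then X is smooth. -/

import Mathlib

/-!
If `z` is a unit vector and `g` a norm-one functional with `g z = 1`, the rank-one operator
`T = g(·) z` attains its norm at `z` and fixes `z`. The hypothesis then turns every `w` with
`z ⊥_B w` into `z ⊥_B g(w) z`, which forces `g w = 0`. Taking a Hahn–Banach functional `f` at `z`,
`z ⊥_B u - f(u) z` for every `u`, so `g u = f u`.
-/

/-- Birkhoff-James orthogonality: `u ⊥_B v` iff `‖u + λ v‖ ≥ ‖u‖` for all real `λ`. -/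
def BJOrth {E : Type*} [NormedAddCommGroup E] [NormedSpace ℝ E] (u v : E) : Prop :=
  ∀ l : ℝ, ‖u‖ ≤ ‖u + l • v‖

section BJOrth

variable {E : Type*} [NormedAddCommGroup E] [NormedSpace ℝ E]

lemma BJOrth.of_dual {f : E →L[ℝ] ℝ} (hf : ‖f‖ ≤ 1) {u v : E} (hu : f u = ‖u‖) (hv : f v = 0) :
    BJOrth u v := fun l =>
  calc ‖u‖ = f (u + l • v) := by simp [hu, hv]
    _ ≤ ‖f (u + l • v)‖ := Real.le_norm_self _
    _ ≤ ‖f‖ * ‖u + l • v‖ := f.le_opNorm _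
    _ ≤ ‖u + l • v‖ := mul_le_of_le_one_left (norm_nonneg _) hf

lemma BJOrth.eq_zero_of_smul_self {u : E} (hu : u ≠ 0) {a : ℝ} (h : BJOrth u (a • u)) :
    a = 0 := by
  by_contra ha
  have := h (-a⁻¹)
  rw [smul_smul, neg_mul, inv_mul_cancel₀ ha, neg_one_smul, add_neg_cancel, norm_zero] at this
  exact hu (norm_le_zero_iff.mp this)

end BJOrth

lemma apply_eq_zero_of_bjOrth {X : Type*} [NormedAddCommGroup X] [NormedSpace ℝ X]
    (h : ∀ (T : X →L[ℝ] X) (x : X), ‖x‖ = 1 → ‖T x‖ = ‖T‖ →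
      ∀ w : X, BJOrth x w → BJOrth (T x) (T w))
    {z : X} (hz : ‖z‖ = 1) {g : X →L[ℝ] ℝ} (hg : ‖g‖ = 1) (hgz : g z = 1)
    {w : X} (hw : BJOrth z w) : g w = 0 := by
  set T : X →L[ℝ] X := g.smulRight z
  have hTz : T z = z := by simp [T, hgz]
  have hT : ‖T‖ = 1 := by rw [ContinuousLinearMap.norm_smulRight_apply, hg, hz, one_mul]
  have hTw := h T z hz (by rw [hTz, hz, hT]) w hw
  rw [hTz] at hTw
  exact hTw.eq_zero_of_smul_self (norm_ne_zero_iff.mp (by simp [hz]))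

theorem stmt15_general {X : Type*} [NormedAddCommGroup X] [NormedSpace ℝ X]
    (h : ∀ (T : X →L[ℝ] X) (x : X), ‖x‖ = 1 → ‖T x‖ = ‖T‖ →
      ∀ w : X, BJOrth x w → BJOrth (T x) (T w)) :
    ∀ z : X, ‖z‖ = 1 → ∃! f : X →L[ℝ] ℝ, ‖f‖ = 1 ∧ f z = 1 := by
  intro z hz
  obtain ⟨f, hf, hfz⟩ := exists_dual_vector ℝ z (norm_ne_zero_iff.mp (by simp [hz]))
  replace hfz : f z = 1 := by simpa [hz] using hfz
  refine ⟨f, ⟨hf, hfz⟩, fun g ⟨hg, hgz⟩ => ?_⟩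
  ext u
  have hw : BJOrth z (u - f u • z) := BJOrth.of_dual hf.le (by simp [hfz, hz]) (by simp [hfz])
  simpa [hgz, sub_eq_zero] using apply_eq_zero_of_bjOrth h hz hg hgz hw

theorem stmt15 {X : Type*} [NormedAddCommGroup X] [NormedSpace ℝ X] [CompleteSpace X]
    (h : ∀ (T : X →L[ℝ] X) (x : X), ‖x‖ = 1 → ‖T x‖ = ‖T‖ →
      ∀ w : X, BJOrth x w → BJOrth (T x) (T w)) :
    ∀ z : X, ‖z‖ = 1 → ∃! f : X →L[ℝ] ℝ, ‖f‖ = 1 ∧ f z = 1 :=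
  stmt15_general h
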